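/- arXiv:cs/0405002 — 11 statements merged into one kernel-verified Lean document; each statement's English description precedes it below -/
import Mathlib

section
/- For an approximation A on L², the lower stable operator C↓_A : y ↦ lfp(A¹(·,y)) and the upper stable operator C↑_A : x ↦ lfp(A²(x,·)) are both antimonotone, and consequently the partial stable operator C_A(x,y) = (C↓_A(y), C↑_A(x)) is monotone with respect to the precision order. -/
/-- The least fixpoint of an operator on a complete lattice (for a monotone
operator this is the least fixpoint, by Knaster–Tarski). -/
def lfpSet {α : Type*} [CompleteLattice α] (f : α → α) : α := sInf {a | f a ≤ a}

lemma lfpSet_le_lfpSet {α : Type*} [CompleteLattice α] {f g : α → α}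
    (h : ∀ a, f a ≤ g a) : lfpSet f ≤ lfpSet g := by
  apply sInf_le_sInf
  intro a ha
  exact (h a).trans ha

/-- For an approximation A on L², the lower stable operator C↓_A : y ↦ lfp(A¹(·,y))
and the upper stable operator C↑_A : x ↦ lfp(A²(x,·)) are antimonotone, and the
partial stable operator C_A(x,y) = (C↓_A(y), C↑_A(x)) is monotone w.r.t. the
precision order. -/
theorem stable_operators_antimonotone {L : Type*} [CompleteLattice L]
    (A : L × L → L × L)
    (hmono : ∀ p q : L × L, p.1 ≤ q.1 → q.2 ≤ p.2 →
      (A p).1 ≤ (A q).1 ∧ (A q).2 ≤ (A p).2) :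
    (∀ y y' : L, y ≤ y' →
      lfpSet (fun a => (A (a, y')).1) ≤ lfpSet (fun a => (A (a, y)).1)) ∧
    (∀ x x' : L, x ≤ x' →
      lfpSet (fun b => (A (x', b)).2) ≤ lfpSet (fun b => (A (x, b)).2)) ∧
    (∀ p q : L × L, p.1 ≤ q.1 → q.2 ≤ p.2 →
      lfpSet (fun a => (A (a, p.2)).1) ≤ lfpSet (fun a => (A (a, q.2)).1) ∧
      lfpSet (fun b => (A (q.1, b)).2) ≤ lfpSet (fun b => (A (p.1, b)).2)) := by
  refine ⟨?_, ?_, ?_⟩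
  · intro y y' hy
    exact lfpSet_le_lfpSet fun a => (hmono (a, y') (a, y) le_rfl hy).1
  · intro x x' hx
    exact lfpSet_le_lfpSet fun b => (hmono (x, b) (x', b) hx le_rfl).2
  · intro p q h1 h2
    exact ⟨lfpSet_le_lfpSet fun a => (hmono (a, p.2) (a, q.2) le_rfl h2).1,
      lfpSet_le_lfpSet fun b => (hmono (p.1, b) (q.1, b) h1 le_rfl).2⟩
end

section
/- An operator O on a product lattice L = ⊗_{i∈I} L_i is stratifiable (i.e., x|_{≼i} = y|_{≼i} implies O(x)|_{≼i} = O(y)|_{≼i} for all i) if and only if for each i ∈ I and each u ∈ L|_{≺i} there exists a unique operator O_i^u on L_i such that for all x ∈ L with x|_{≺i} = u, one has (O(x))(i) = O_i^u(x(i)). -/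
/-- An operator O on a product lattice ⊗_{i∈I} L_i is stratifiable (the value of
O(x) on strata ≼ i depends only on x restricted to strata ≼ i) iff for every
i and every u ∈ L|_{≺i} there is a unique operator O_i^u on L_i such that
(O x)(i) = O_i^u (x i) whenever x|_{≺i} = u. -/
theorem stratifiable_iff_components {I : Type*} [PartialOrder I]
    {L : I → Type*} [∀ i, CompleteLattice (L i)]
    (O : (∀ i, L i) → (∀ i, L i)) :
    (∀ x y : ∀ i, L i, ∀ i : I,
        (∀ j, j ≤ i → x j = y j) → ∀ j, j ≤ i → O x j = O y j)
    ↔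
    (∀ (i : I) (u : ∀ j : {j : I // j < i}, L j.1),
        ∃! Oi : L i → L i,
          ∀ x : ∀ i, L i, (∀ j : {j : I // j < i}, x j.1 = u j) →
            O x i = Oi (x i)) := by
  classical
  constructor
  · intro hS i u
    set ext : L i → ∀ j, L j := fun v j =>
      if h : j < i then u ⟨j, h⟩ else if h' : j = i then h' ▸ v else ⊥ with hext
    have hext_lt : ∀ v (j : {j : I // j < i}), ext v j.1 = u j := by
      intro v j
      simp [hext, j.2]
    have hext_i : ∀ v, ext v i = v := by
      intro v
      simp [hext, lt_irrefl]
    refine ⟨fun v => O (ext v) i, ?_, ?_⟩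
    · intro x hx
      have : O x i = O (ext (x i)) i := by
        refine hS x (ext (x i)) i ?_ i le_rfl
        intro j hj
        rcases lt_or_eq_of_le hj with h | h
        · rw [hext_lt (x i) ⟨j, h⟩, hx ⟨j, h⟩]
        · subst h; rw [hext_i]
      exact this
    · intro Oi' h'
      funext v
      have := h' (ext v) (hext_lt v)
      rw [hext_i] at this
      exact this.symm
  · intro hC x y i hxy j hj
    obtain ⟨Oj, hOj, -⟩ := hC j (fun k => x k.1)
    have hx : O x j = Oj (x j) := hOj x (fun k => rfl)
    have hy : O y j = Oj (y j) := hOj y (fun k => (hxy k.1 (le_of_lt (lt_of_lt_of_le k.2 hj))).symm)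
    rw [hx, hy, hxy j hj]
end

section
/- If O is a stratifiable operator on a product lattice L that is monotone with respect to the product order, then every component O_i^u is a monotone operator on L_i. -/
/-- If a stratifiable operator O on a product lattice is monotone w.r.t. the
product order, then every component operator O_i^u is monotone. -/
theorem components_of_monotone_are_monotone {I : Type*} [PartialOrder I]
    {L : I → Type*} [∀ i, CompleteLattice (L i)]
    (O : (∀ i, L i) → (∀ i, L i))
    (hmono : Monotone O)
    (hstrat : ∀ x y : ∀ i, L i, ∀ i : I,
        (∀ j, j ≤ i → x j = y j) → ∀ j, j ≤ i → O x j = O y j)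
    (Oc : ∀ i : I, (∀ j : {j : I // j < i}, L j.1) → L i → L i)
    (hcomp : ∀ (x : ∀ i, L i) (i : I),
        O x i = Oc i (fun j => x j.1) (x i)) :
    ∀ (i : I) (u : ∀ j : {j : I // j < i}, L j.1), Monotone (Oc i u) := by
  classical
  intro i u a b hab
  set x : ∀ j, L j := fun j => if h : j < i then u ⟨j, h⟩ else if h : j = i then h ▸ a else ⊥ with hx
  set y : ∀ j, L j := fun j => if h : j < i then u ⟨j, h⟩ else if h : j = i then h ▸ b else ⊥ with hy
  have hxy : x ≤ y := by
    intro j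
    simp only [hx, hy]
    by_cases h1 : j < i
    · simp [h1]
    · by_cases h2 : j = i
      · subst h2; simp [h1, hab]
      · simp [h1, h2]
  have hxi : x i = a := by simp [hx, lt_irrefl]
  have hyi : y i = b := by simp [hy, lt_irrefl]
  have hxu : (fun j : {j : I // j < i} => x j.1) = u := by
    funext j; simp [hx, j.2]
  have hyu : (fun j : {j : I // j < i} => y j.1) = u := by
    funext j; simp [hy, j.2]
  have := hmono hxy i
  rwa [hcomp x i, hcomp y i, hxu, hyu, hxi, hyi] at this
end

section
/- Let O be a monotone operator on a complete product lattice L over a well-founded index set I, and for each i ∈ I and u ∈ L|_{≺i} let P_i^u be a monotone operator on L_i such that x is a fixpoint of O iff for all i, x(i) is a fixpoint of P_i^{x|_{≺i}}. Then x is the least fixpoint of O iff for all i ∈ I, x(i) is the least fixpoint of P_i^{x|_{≺i}}. -/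
/-- Let O be a monotone operator on a complete product lattice over a
well-founded index set, and for each i and u ∈ L|_{≺i} let P_i^u be a monotone
operator on L_i such that x is a fixpoint of O iff for all i, x(i) is a fixpoint
of P_i^{x|_{≺i}}.  Then x is the least fixpoint of O iff for all i, x(i) is the
least fixpoint of P_i^{x|_{≺i}}. -/
theorem least_fixpoint_iff_component_least_fixpoints
    {I : Type*} [PartialOrder I] [WellFoundedLT I]
    {L : I → Type*} [∀ i, CompleteLattice (L i)]
    (O : (∀ i, L i) → (∀ i, L i))
    (hmono : Monotone O)
    (P : ∀ i : I, (∀ j : {j : I // j < i}, L j.1) → L i → L i)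
    (hPmono : ∀ (i : I) (u : ∀ j : {j : I // j < i}, L j.1), Monotone (P i u))
    (hfp : ∀ x : ∀ i, L i,
        O x = x ↔ ∀ i : I, P i (fun j : {j : I // j < i} => x j.1) (x i) = x i) :
    ∀ x : ∀ i, L i,
      IsLeast {y | O y = y} x ↔
        ∀ i : I,
          IsLeast {a : L i | P i (fun j : {j : I // j < i} => x j.1) a = a} (x i) := by
  classical
  have fwd : ∀ x : ∀ i, L i, IsLeast {y | O y = y} x →
      ∀ i : I, IsLeast {a : L i | P i (fun j : {j : I // j < i} => x j.1) a = a} (x i) := by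
    intro x hx i
    have hxfix := (hfp x).mp hx.1
    refine ⟨hxfix i, ?_⟩
    intro a ha
    -- build a fixpoint y of O with y i = a and y j = x j for j < i
    set y : ∀ j, L j := WellFounded.fix wellFounded_lt
      (fun j rec =>
        if h : j < i then x j
        else if h' : j = i then h'.symm ▸ a
        else OrderHom.lfp ⟨P j (fun k => rec k.1 k.2), hPmono j _⟩) with hy
    have hyeq : ∀ j, y j =
        if h : j < i then x j
        else if h' : j = i then h'.symm ▸ a
        else OrderHom.lfp ⟨P j (fun k : {k : I // k < j} => y k.1), hPmono j _⟩ := by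
      intro j
      rw [hy]
      exact WellFounded.fix_eq _ _ j
    have hylt : ∀ j, j < i → y j = x j := by
      intro j h
      rw [hyeq j, dif_pos h]
    have hyi : y i = a := by
      rw [hyeq i, dif_neg (lt_irrefl i), dif_pos rfl]
    have hyfix : O y = y := by
      rw [hfp]
      intro j
      by_cases h : j < i
      · have h2 : (fun k : {k : I // k < j} => y k.1) = (fun k : {k : I // k < j} => x k.1) := by
          funext k; exact hylt k.1 (k.2.trans h)
        rw [hylt j h, h2]
        exact hxfix j
      · by_cases h' : j = i
        · subst h'
          have h2 : (fun k : {k : I // k < j} => y k.1) = (fun k : {k : I // k < j} => x k.1) := by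
            funext k; exact hylt k.1 k.2
          rw [hyi, h2]
          exact ha
        · have h1 : y j = OrderHom.lfp ⟨P j (fun k : {k : I // k < j} => y k.1), hPmono j _⟩ := by
            rw [hyeq j, dif_neg h, dif_neg h']
          rw [h1]
          exact OrderHom.map_lfp ⟨P j (fun k : {k : I // k < j} => y k.1), hPmono j _⟩
    have hxy : x ≤ y := hx.2 hyfix
    calc x i ≤ y i := hxy i
      _ = a := hyi
  intro x
  refine ⟨fwd x, ?_⟩
  intro h
  set z : ∀ i, L i := OrderHom.lfp ⟨O, hmono⟩ with hzdef
  have hz : IsLeast {y | O y = y} z := by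
    refine ⟨OrderHom.map_lfp ⟨O, hmono⟩, ?_⟩
    intro y hy
    exact OrderHom.lfp_le ⟨O, hmono⟩ (le_of_eq hy)
  have hzc := fwd z hz
  have hxz : ∀ i, x i = z i := by
    intro i
    refine wellFounded_lt.induction (C := fun i => x i = z i) i ?_
    intro i IH
    have hctx : (fun j : {j : I // j < i} => x j.1) = (fun j : {j : I // j < i} => z j.1) := by
      funext j; exact IH j.1 j.2
    have h1 := h i
    rw [hctx] at h1
    exact h1.unique (hzc i)
  have hxz' : x = z := funext hxz
  rw [hxz']
  exact hz
end

section
/- The well-foundedness assumption in the stratified least-fixpoint theorem is necessary: on the product lattice L = ⊗_{z∈ℤ}{0,1} indexed by the integers with their usual order, the operator O mapping x to y with y(z)=0 if x(z−1)=0 and y(z)=1 otherwise is stratifiable and monotone, its least fixpoint is the constant-0 function, yet the constant-1 function x satisfies that x(z) is the least fixpoint of the component O_z^{x|_{<z}} for every z ∈ ℤ. -/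
/-- The well-foundedness assumption in the stratified least-fixpoint theorem is
necessary: on L = ⊗_{z∈ℤ}{0,1} (here ℤ → Bool, ordered pointwise), the operator
O with (O x)(z) = 0 if x(z−1) = 0 and 1 otherwise (i.e. (O x)(z) = x(z-1)) is
stratifiable and monotone, has the constant-0 function as least fixpoint, yet
the constant-1 function x is such that x(z) is the least fixpoint of the
component O_z^{x|_{<z}} for every z. -/
theorem wellfoundedness_necessary :
    ∀ (O : (ℤ → Bool) → (ℤ → Bool)), O = (fun x z => x (z - 1)) →
    ∀ (Oc : ∀ z : ℤ, ({j : ℤ // j < z} → Bool) → Bool → Bool),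
      Oc = (fun z u _ => u ⟨z - 1, by omega⟩) →
      -- O is stratifiable (over the usual, non-well-founded order of ℤ)
      (∀ x y : ℤ → Bool, ∀ i : ℤ,
          (∀ j, j ≤ i → x j = y j) → ∀ j, j ≤ i → O x j = O y j) ∧
      -- O is monotone
      Monotone O ∧
      -- the Oc z are indeed the components of O
      (∀ (x : ℤ → Bool) (z : ℤ),
          O x z = Oc z (fun j : {j : ℤ // j < z} => x j.1) (x z)) ∧
      -- the least fixpoint of O is the constant-0 function
      IsLeast {x : ℤ → Bool | O x = x} (fun _ => false) ∧
      -- yet the constant-1 function satisfies the componentwise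
      -- least-fixpoint condition at every level
      (∀ z : ℤ,
          IsLeast
            {a : Bool |
              Oc z (fun j : {j : ℤ // j < z} => (fun _ : ℤ => true) j.1) a = a}
            ((fun _ : ℤ => true) z)) := by
  intro O hO Oc hOc
  subst hO hOc
  refine ⟨?_, ?_, ?_, ?_, ?_⟩
  · intro x y i h j hj
    exact h (j - 1) (by omega)
  · intro x y hxy z
    exact hxy (z - 1)
  · intro x z
    rfl
  · constructor
    · funext z; rfl
    · intro x hx z
      exact Bool.false_le _
  · intro z
    constructor
    · rfl
    · intro a ha
      simp only [Set.mem_setOf_eq] at ha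
      simp [← ha]
end

section
/- If A is a stratifiable approximation on the product bilattice L², then for every fixed y ∈ L the operator A¹(·,y) on L is stratifiable, and its components satisfy (A¹(·,y))_i^u = (A_i^{(u, y|_{≺i})})¹(·, y(i)); symmetrically, A²(x,·) is stratifiable with components (A²(x,·))_i^u = (A_i^{(x|_{≺i}, u)})²(x(i), ·). -/
/-- If A is a stratifiable approximation on the product bilattice L², then for
each fixed y the operator A¹(·,y) is stratifiable with components
(A¹(·,y))_i^u = (A_i^{(u,y|_{≺i})})¹(·, y(i)), and symmetrically A²(x,·) is
stratifiable with components (A²(x,·))_i^u = (A_i^{(x|_{≺i},u)})²(x(i), ·). -/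
theorem stratified_approximation_partial_ops {I : Type*} [PartialOrder I]
    {L : I → Type*} [∀ i, CompleteLattice (L i)]
    (A : ((∀ i, L i) × (∀ i, L i)) → ((∀ i, L i) × (∀ i, L i)))
    -- A is an approximation: monotone w.r.t. the precision order
    (hmono : ∀ p q : (∀ i, L i) × (∀ i, L i), p.1 ≤ q.1 → q.2 ≤ p.2 →
        (A p).1 ≤ (A q).1 ∧ (A q).2 ≤ (A p).2)
    -- A is stratifiable (viewing L² as ⊗_i L_i²)
    (hstrat : ∀ x y x' y' : ∀ i, L i, ∀ i : I,
        (∀ j, j ≤ i → x j = x' j ∧ y j = y' j) →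
        ∀ j, j ≤ i → (A (x, y)).1 j = (A (x', y')).1 j ∧
          (A (x, y)).2 j = (A (x', y')).2 j)
    -- the components of A
    (Ac : ∀ i : I,
        ((∀ j : {j : I // j < i}, L j.1) × (∀ j : {j : I // j < i}, L j.1)) →
        (L i × L i) → (L i × L i))
    (hcomp : ∀ (x y : ∀ i, L i) (i : I),
        (A (x, y)).1 i =
          (Ac i (fun j => x j.1, fun j => y j.1) (x i, y i)).1 ∧
        (A (x, y)).2 i =
          (Ac i (fun j => x j.1, fun j => y j.1) (x i, y i)).2) :
    -- A¹(·,y) is stratifiable with the stated components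
    (∀ y : ∀ i, L i,
      (∀ x x' : ∀ i, L i, ∀ i : I, (∀ j, j ≤ i → x j = x' j) →
          ∀ j, j ≤ i → (A (x, y)).1 j = (A (x', y)).1 j) ∧
      (∀ (i : I) (u : ∀ j : {j : I // j < i}, L j.1) (x : ∀ i, L i),
          (∀ j : {j : I // j < i}, x j.1 = u j) →
          (A (x, y)).1 i = (Ac i (u, fun j => y j.1) (x i, y i)).1)) ∧
    -- A²(x,·) is stratifiable with the stated components
    (∀ x : ∀ i, L i,
      (∀ y y' : ∀ i, L i, ∀ i : I, (∀ j, j ≤ i → y j = y' j) →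
          ∀ j, j ≤ i → (A (x, y)).2 j = (A (x, y')).2 j) ∧
      (∀ (i : I) (u : ∀ j : {j : I // j < i}, L j.1) (y : ∀ i, L i),
          (∀ j : {j : I // j < i}, y j.1 = u j) →
          (A (x, y)).2 i = (Ac i (fun j => x j.1, u) (x i, y i)).2)) := by
  refine ⟨fun y => ⟨fun x x' i h j hj => (hstrat x y x' y i (fun j hj => ⟨h j hj, rfl⟩) j hj).1,
    fun i u x hu => ?_⟩,
    fun x => ⟨fun y y' i h j hj => (hstrat x y x y' i (fun j hj => ⟨rfl, h j hj⟩) j hj).2,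
    fun i u y hu => ?_⟩⟩
  · have := (hcomp x y i).1
    rwa [show (fun j : {j : I // j < i} => x j.1) = u from funext hu] at this
  · have := (hcomp x y i).2
    rwa [show (fun j : {j : I // j < i} => y j.1) = u from funext hu] at this
end

section
/- If A is a stratifiable approximation on L² over a well-founded index set, then for all x, y ∈ L: x = C↓_A(y) iff for each i ∈ I, x(i) = C↓_{A_i^{(x,y)|_{≺i}}}(y(i)), and y = C↑_A(x) iff for each i ∈ I, y(i) = C↑_{A_i^{(x,y)|_{≺i}}}(x(i)). -/
lemma lfpSet_le {α : Type*} [CompleteLattice α] {f : α → α} {a : α} (h : f a ≤ a) :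
    lfpSet f ≤ a := sInf_le h

lemma map_lfpSet {α : Type*} [CompleteLattice α] {f : α → α} (hf : Monotone f) :
    f (lfpSet f) = lfpSet f := by
  have h1 : f (lfpSet f) ≤ lfpSet f :=
    le_sInf fun a ha => (hf (sInf_le ha)).trans ha
  exact le_antisymm h1 (sInf_le (hf h1))

/-- Key lemma: if `f` is a monotone operator on a product lattice whose `i`-th
component only depends on the components `< i` and the component at `i`
(through `G`), then `x` is the least fixpoint of `f` iff each `x i` is the
least fixpoint of the corresponding component operator. -/
lemma lfpSet_stratified {I : Type*} [PartialOrder I] [WellFoundedLT I]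
    {L : I → Type*} [∀ i, CompleteLattice (L i)]
    (f : (∀ i, L i) → ∀ i, L i) (hf : Monotone f)
    (G : ∀ i : I, (∀ j : {j : I // j < i}, L j.1) → L i → L i)
    (hG : ∀ (a : ∀ i, L i) (i : I), f a i = G i (fun j => a j.1) (a i)) :
    ∀ x : ∀ i, L i, x = lfpSet f ↔ ∀ i, x i = lfpSet (G i (fun j => x j.1)) := by
  classical
  -- each component operator (with parameters coming from a full element) is monotone
  have hrepr : ∀ (a : ∀ i, L i) (i : I) (b : L i),
      f (Function.update a i b) i = G i (fun j => a j.1) b := by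
    intro a i b
    rw [hG]
    have e1 : (fun j : {j : I // j < i} => Function.update a i b j.1) =
        fun j : {j : I // j < i} => a j.1 :=
      funext fun j => Function.update_of_ne (ne_of_lt j.2) _ _
    rw [e1, Function.update_self]
  have hGmono : ∀ (a : ∀ i, L i) (i : I), Monotone (G i (fun j => a j.1)) := by
    intro a i b b' hb
    rw [← hrepr a i b, ← hrepr a i b']
    refine hf (fun k => ?_) i
    by_cases hk : k = i
    · subst hk; simpa using hb
    · simp [Function.update_of_ne hk]
  -- the least fixpoint of f satisfies the componentwise condition
  have main : ∀ i, lfpSet f i = lfpSet (G i (fun j => lfpSet f j.1)) := by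
    intro i
    set xs := lfpSet f with hxs
    have hfix : f xs = xs := map_lfpSet hf
    set Gi := G i (fun j => xs j.1) with hGi
    have hfixpt : Gi (xs i) = xs i := by
      rw [hGi, ← hG xs i, hfix]
    set l := lfpSet Gi with hl
    have hlfix : Gi l = l := map_lfpSet (hGmono xs i)
    have h1 : l ≤ xs i := lfpSet_le (le_of_eq hfixpt)
    set w := Function.update xs i l with hw
    have hw_le : w ≤ xs := by
      intro k
      by_cases hk : k = i
      · subst hk; simpa [hw] using h1
      · simp [hw, Function.update_of_ne hk]
    have hpre : f w ≤ w := by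
      intro j
      by_cases hj : j = i
      · subst hj
        have : f w j = l := by
          have := hrepr xs j l
          rw [← hw] at this
          rw [this]; exact hlfix
        rw [this, hw, Function.update_self]
      · calc f w j ≤ f xs j := hf hw_le j
          _ = xs j := by rw [hfix]
          _ = w j := by rw [hw, Function.update_of_ne hj]
    have h2 : xs i ≤ l := by
      have : lfpSet f ≤ w := lfpSet_le hpre
      have := this i
      rwa [hw, Function.update_self] at this
    exact le_antisymm h2 h1
  intro x
  constructor
  · intro hx
    subst hx
    exact main
  · intro h
    -- x is a fixpoint of f
    have hxfix : f x = x := by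
      funext i
      rw [hG x i, h i]
      exact map_lfpSet (hGmono x i)
    have hle : lfpSet f ≤ x := lfpSet_le (le_of_eq hxfix)
    -- well-founded induction gives x ≤ lfpSet f, in fact equality componentwise
    have heq : ∀ i, x i = lfpSet f i := by
      intro i
      induction i using WellFoundedLT.induction with
      | ind i ih =>
        have e : (fun j : {j : I // j < i} => x j.1) =
            fun j : {j : I // j < i} => lfpSet f j.1 :=
          funext fun j => ih j.1 j.2
        rw [h i, e, ← main i]
    exact funext heq

/-- For a stratifiable approximation A on L² over a well-founded index set:
x = C↓_A(y) iff for each i, x(i) = C↓ of the component A_i^{(x,y)|_{≺i}} at y(i),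
and y = C↑_A(x) iff for each i, y(i) = C↑ of that component at x(i). -/
theorem stable_operators_stratified {I : Type*} [PartialOrder I] [WellFoundedLT I]
    {L : I → Type*} [∀ i, CompleteLattice (L i)]
    (A : ((∀ i, L i) × (∀ i, L i)) → ((∀ i, L i) × (∀ i, L i)))
    (hmono : ∀ p q : (∀ i, L i) × (∀ i, L i), p.1 ≤ q.1 → q.2 ≤ p.2 →
        (A p).1 ≤ (A q).1 ∧ (A q).2 ≤ (A p).2)
    (hstrat : ∀ x y x' y' : ∀ i, L i, ∀ i : I,
        (∀ j, j ≤ i → x j = x' j ∧ y j = y' j) →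
        ∀ j, j ≤ i → (A (x, y)).1 j = (A (x', y')).1 j ∧
          (A (x, y)).2 j = (A (x', y')).2 j)
    (Ac : ∀ i : I,
        ((∀ j : {j : I // j < i}, L j.1) × (∀ j : {j : I // j < i}, L j.1)) →
        (L i × L i) → (L i × L i))
    (hcomp : ∀ (x y : ∀ i, L i) (i : I),
        (A (x, y)).1 i =
          (Ac i (fun j => x j.1, fun j => y j.1) (x i, y i)).1 ∧
        (A (x, y)).2 i =
          (Ac i (fun j => x j.1, fun j => y j.1) (x i, y i)).2) :
    ∀ x y : ∀ i, L i,
      (x = lfpSet (fun a => (A (a, y)).1) ↔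
        ∀ i : I, x i =
          lfpSet (fun a => (Ac i (fun j => x j.1, fun j => y j.1) (a, y i)).1)) ∧
      (y = lfpSet (fun b => (A (x, b)).2) ↔
        ∀ i : I, y i =
          lfpSet (fun b => (Ac i (fun j => x j.1, fun j => y j.1) (x i, b)).2)) := by
  intro x y
  constructor
  · -- downward stable operator
    have hf : Monotone (fun a => (A (a, y)).1) :=
      fun a a' ha => (hmono (a, y) (a', y) ha le_rfl).1
    have := lfpSet_stratified (fun a => (A (a, y)).1) hf
      (fun i p b => (Ac i (p, fun j => y j.1) (b, y i)).1)
      (fun a i => (hcomp a y i).1) x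
    exact this
  · -- upward stable operator
    have hf : Monotone (fun b => (A (x, b)).2) := by
      intro b b' hb
      exact (hmono (x, b') (x, b) le_rfl hb).2
    have := lfpSet_stratified (fun b => (A (x, b)).2) hf
      (fun i p c => (Ac i ((fun j => x j.1), p) (x i, c)).2)
      (fun b i => (hcomp x b i).2) y
    exact this
end

section
/- Let L̃ be a finite lattice, L a lattice, Õ a monotone operator on L̃, O an operator on L, and k : L̃ → L a function with k ∘ Õ = O ∘ k and O(L) ⊆ k(L̃), such that every non-empty preimage k⁻¹(x) has a central element (one comparable to all other elements of k⁻¹(x)). Then k(fp(Õ)) = fp(O). -/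
private lemma iterate_fix {Lt : Type*} [PartialOrder Lt] [Finite Lt]
    {f : Lt → Lt} (hf : Monotone f) {c : Lt} (hc : c ≤ f c) :
    ∃ n, f (f^[n] c) = f^[n] c := by
  have hmono : Monotone fun n => f^[n] c := hf.monotone_iterate_of_le_map hc
  obtain ⟨m, n, hne, heq⟩ := Finite.exists_ne_map_eq_of_infinite (fun n => f^[n] c)
  rcases hne.lt_or_gt with h | h
  · refine ⟨m, le_antisymm ?_ ?_⟩
    · have := hmono (Nat.succ_le_of_lt h)
      simpa [Function.iterate_succ_apply', heq] using this
    · simpa [Function.iterate_succ_apply'] using hmono (Nat.le_succ m)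
  · refine ⟨n, le_antisymm ?_ ?_⟩
    · have := hmono (Nat.succ_le_of_lt h)
      simpa [Function.iterate_succ_apply', heq] using this
    · simpa [Function.iterate_succ_apply'] using hmono (Nat.le_succ n)

/-- Finite-lattice version: if Õ is monotone on a finite lattice L̃,
k ∘ Õ = O ∘ k, O(L) ⊆ k(L̃), and every non-empty preimage k⁻¹(x) has a central
element, then k(fp(Õ)) = fp(O). -/
theorem mimic_fixpoints_finite {Lt L : Type*} [Lattice Lt] [Fintype Lt] [Lattice L]
    (Ot : Lt → Lt) (O : L → L) (k : Lt → L)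
    (hOt : Monotone Ot)
    (hcomm : ∀ x : Lt, k (Ot x) = O (k x))
    (himg : ∀ x : L, ∃ y : Lt, k y = O x)
    (hcentral : ∀ x : L, (∃ y : Lt, k y = x) →
        ∃ c : Lt, k c = x ∧ ∀ d : Lt, k d = x → c ≤ d ∨ d ≤ c) :
    k '' {y : Lt | Ot y = y} = {x : L | O x = x} := by
  ext x
  constructor
  · rintro ⟨y, hy, rfl⟩
    simp only [Set.mem_setOf_eq] at hy ⊢
    rw [← hcomm, hy]
  · rintro hx
    simp only [Set.mem_setOf_eq] at hx
    obtain ⟨y, hy⟩ := himg x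
    rw [hx] at hy
    obtain ⟨c, hkc, hcomp⟩ := hcentral x ⟨y, hy⟩
    -- all iterates of Ot on c map to x under k
    have hiter : ∀ n, k (Ot^[n] c) = x := by
      intro n
      induction n with
      | zero => simpa using hkc
      | succ n ih =>
        rw [Function.iterate_succ_apply', hcomm, ih, hx]
    have hOtc : k (Ot c) = x := hiter 1
    rcases hcomp (Ot c) hOtc with h | h
    · obtain ⟨n, hn⟩ := iterate_fix hOt h
      exact ⟨Ot^[n] c, hn, hiter n⟩
    · obtain ⟨n, hn⟩ := iterate_fix hOt.dual (show OrderDual.toDual c ≤ Ot c from h)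
      exact ⟨Ot^[n] c, hn, hiter n⟩
end

section
/- Let L̃ and L be complete lattices with L̃ k-similar to L (k is chain-continuous and every non-empty preimage k⁻¹(x) has a central element), let Õ be a monotone operator on L̃ and O an operator on L such that Õ k-mimics O (k ∘ Õ = O ∘ k and O(L) ⊆ k(L̃)). Then k(fp(Õ)) = fp(O). -/
private lemma mimic_aux {Lt L : Type*} [PartialOrder Lt] [Preorder L]
    (Ot : Lt → Lt) (k : Lt → L) (x : L)
    (hOt : Monotone Ot)
    (hfib : ∀ y : Lt, k y = x → k (Ot y) = x)
    (hsup : ∀ C : Set Lt, C.Nonempty → IsChain (· ≤ ·) C → (∀ y ∈ C, k y = x) →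
        ∃ s : Lt, k s = x ∧ (∀ y ∈ C, y ≤ s) ∧ (∀ b, (∀ y ∈ C, y ≤ b) → s ≤ b))
    (c : Lt) (hc : k c = x) (hcle : c ≤ Ot c) :
    ∃ y : Lt, Ot y = y ∧ k y = x := by
  set S : Set Lt := {y | k y = x ∧ c ≤ y ∧ y ≤ Ot y} with hS
  have chains : ∀ C ⊆ S, IsChain (· ≤ ·) C → ∃ ub ∈ S, ∀ z ∈ C, z ≤ ub := by
    intro C hCS hC
    rcases C.eq_empty_or_nonempty with rfl | hne
    · exact ⟨c, ⟨hc, le_rfl, hcle⟩, fun z hz => absurd hz (Set.notMem_empty z)⟩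
    · obtain ⟨s, hskx, hub, hlub⟩ := hsup C hne hC (fun y hy => (hCS hy).1)
      refine ⟨s, ⟨hskx, ?_, ?_⟩, hub⟩
      · obtain ⟨y, hy⟩ := hne
        exact le_trans (hCS hy).2.1 (hub y hy)
      · exact hlub (Ot s) (fun y hy => le_trans (hCS hy).2.2 (hOt (hub y hy)))
  obtain ⟨m, ⟨hmx, hcm, hmle⟩, hmax⟩ := zorn_le₀ S chains
  have hOtm : Ot m ∈ S := ⟨hfib m hmx, le_trans hcm hmle, hOt hmle⟩
  exact ⟨m, (le_antisymm hmle (hmax hOtm hmle)).symm, hmx⟩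

private lemma mimic_aux' {Lt L : Type*} [PartialOrder Lt] [Preorder L]
    (Ot : Lt → Lt) (k : Lt → L) (x : L)
    (hOt : Monotone Ot)
    (hfib : ∀ y : Lt, k y = x → k (Ot y) = x)
    (hinf : ∀ C : Set Lt, C.Nonempty → IsChain (· ≤ ·) C → (∀ y ∈ C, k y = x) →
        ∃ s : Lt, k s = x ∧ (∀ y ∈ C, s ≤ y) ∧ (∀ b, (∀ y ∈ C, b ≤ y) → b ≤ s))
    (c : Lt) (hc : k c = x) (hcle : Ot c ≤ c) :
    ∃ y : Lt, Ot y = y ∧ k y = x := by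
  set S : Set Lt := {y | k y = x ∧ y ≤ c ∧ Ot y ≤ y} with hS
  have chains : ∀ C ⊆ S, IsChain (· ≥ ·) C → ∃ lb ∈ S, ∀ z ∈ C, lb ≤ z := by
    intro C hCS hC
    rcases C.eq_empty_or_nonempty with rfl | hne
    · exact ⟨c, ⟨hc, le_rfl, hcle⟩, fun z hz => absurd hz (Set.notMem_empty z)⟩
    · obtain ⟨s, hskx, hlb, hglb⟩ := hinf C hne hC.symm (fun y hy => (hCS hy).1)
      refine ⟨s, ⟨hskx, ?_, ?_⟩, hlb⟩
      · obtain ⟨y, hy⟩ := hne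
        exact le_trans (hlb y hy) (hCS hy).2.1
      · exact hglb (Ot s) (fun y hy => le_trans (hOt (hlb y hy)) (hCS hy).2.2)
  obtain ⟨m, ⟨hmx, hcm, hmle⟩, hmax⟩ :=
    zorn_le₀ (α := Ltᵒᵈ) S (fun C hCS hC => chains C hCS hC)
  have hOtm : Ot m ∈ S := ⟨hfib m hmx, le_trans hmle hcm, hOt hmle⟩
  have h1 : @LE.le Ltᵒᵈ _ m (Ot m) := hmle
  have h2 : @LE.le Lt _ m (Ot m) := hmax hOtm h1
  exact ⟨m, le_antisymm hmle h2, hmx⟩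

/-- If L̃ is k-similar to L (k is chain-continuous and every non-empty preimage
k⁻¹(x) has a central element), Õ is monotone and Õ k-mimics O
(k ∘ Õ = O ∘ k and O(L) ⊆ k(L̃)), then k(fp(Õ)) = fp(O). -/
theorem mimic_fixpoints_complete {Lt L : Type*} [CompleteLattice Lt] [CompleteLattice L]
    (Ot : Lt → Lt) (O : L → L) (k : Lt → L)
    (hOt : Monotone Ot)
    -- k is chain-continuous
    (hchain : ∀ C : Set Lt, C.Nonempty → IsChain (· ≤ ·) C →
        k (sInf C) = sInf (k '' C) ∧ k (sSup C) = sSup (k '' C))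
    -- non-empty preimages have central elements
    (hcentral : ∀ x : L, (∃ y : Lt, k y = x) →
        ∃ c : Lt, k c = x ∧ ∀ d : Lt, k d = x → c ≤ d ∨ d ≤ c)
    -- Õ k-mimics O
    (hcomm : ∀ x : Lt, k (Ot x) = O (k x))
    (himg : ∀ x : L, ∃ y : Lt, k y = O x) :
    k '' {y : Lt | Ot y = y} = {x : L | O x = x} := by
  ext x
  constructor
  · rintro ⟨y, hy, rfl⟩
    show O (k y) = k y
    rw [← hcomm y, hy]
  · intro hx
    have hx : O x = x := hx
    obtain ⟨y₀, hy₀⟩ := himg x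
    rw [hx] at hy₀
    obtain ⟨c, hck, hcent⟩ := hcentral x ⟨y₀, hy₀⟩
    have hfib : ∀ y : Lt, k y = x → k (Ot y) = x := fun y hy => by
      rw [hcomm y, hy, hx]
    have himage : ∀ (C : Set Lt), C.Nonempty → (∀ y ∈ C, k y = x) → k '' C = {x} := by
      intro C ⟨y, hy⟩ hall
      apply Set.eq_singleton_iff_nonempty_unique_mem.2
      exact ⟨⟨x, y, hy, hall y hy⟩, fun z ⟨w, hw, hwz⟩ => hwz ▸ hall w hw⟩
    have hOtc : k (Ot c) = x := hfib c hck
    rcases hcent (Ot c) hOtc with hle | hle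
    · have hs : ∀ C : Set Lt, C.Nonempty → IsChain (· ≤ ·) C → (∀ y ∈ C, k y = x) →
          ∃ s : Lt, k s = x ∧ (∀ y ∈ C, y ≤ s) ∧ (∀ b, (∀ y ∈ C, y ≤ b) → s ≤ b) := by
        intro C hne hC hall
        refine ⟨sSup C, ?_, fun y hy => le_sSup hy, fun b hb => sSup_le hb⟩
        rw [(hchain C hne hC).2, himage C hne hall, sSup_singleton]
      obtain ⟨m, hm1, hm2⟩ := mimic_aux Ot k x hOt hfib hs c hck hle
      exact ⟨m, hm1, hm2⟩
    · have hs : ∀ C : Set Lt, C.Nonempty → IsChain (· ≤ ·) C → (∀ y ∈ C, k y = x) →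
          ∃ s : Lt, k s = x ∧ (∀ y ∈ C, s ≤ y) ∧ (∀ b, (∀ y ∈ C, b ≤ y) → b ≤ s) := by
        intro C hne hC hall
        refine ⟨sInf C, ?_, fun y hy => sInf_le hy, fun b hb => le_sInf hb⟩
        rw [(hchain C hne hC).1, himage C hne hall, sInf_singleton]
      obtain ⟨m, hm1, hm2⟩ := mimic_aux' Ot k x hOt hfib hs c hck hle
      exact ⟨m, hm1, hm2⟩
end

section
/- Under the hypotheses that L̃ ∼_k L, Õ and O are monotone operators on the complete lattices L̃ and L respectively, and Õ k-mimics O, the image under k of the least fixpoint of Õ is the least fixpoint of O: k(lfp(Õ)) = lfp(O). -/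
/-! A fixpoint x of O has a central k-preimage c, and k (Õ c) = O x = x makes Õ c
comparable with c. If Õ c ≤ c, then lfp Õ ≤ c. If c ≤ Õ c, Zorn's lemma applied to the
post-fixpoints in the fibre k⁻¹(x), which is closed under Õ and, by chain-continuity, under
suprema of chains, yields a fixpoint of Õ in that fibre. Either way lfp Õ lies below a point
mapped to x, and k is monotone. -/

open Set

theorem Monotone.of_map_sSup_chain {α β : Type*} [CompleteSemilatticeSup α]
    [CompleteSemilatticeSup β]
    {k : α → β}
    (hk : ∀ C : Set α, C.Nonempty → IsChain (· ≤ ·) C → k (sSup C) = sSup (k '' C)) :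
    Monotone k := fun a b hab => by
  have hsup : sSup {a, b} = b :=
    (isLUB_sSup _).unique (IsGreatest.isLUB ⟨by simp, by simp [hab]⟩)
  calc k a ≤ sSup (k '' {a, b}) := le_sSup (mem_image_of_mem k (mem_insert a {b}))
    _ = k b := by rw [← hk {a, b} (insert_nonempty a {b}) (IsChain.pair hab), hsup]

theorem exists_fixedPoint_ge_of_chain_closed {α : Type*} [CompleteSemilatticeSup α]
    {f : α → α} (hf : Monotone f) {s : Set α} (hfs : MapsTo f s s)
    (hs : ∀ C ⊆ s, C.Nonempty → IsChain (· ≤ ·) C → sSup C ∈ s)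
    {c : α} (hc : c ∈ s) (hcf : c ≤ f c) : ∃ z ∈ s, c ≤ z ∧ f z = z := by
  obtain ⟨m, hcm, ⟨hms, hmf⟩, hmax⟩ :=
    zorn_le_nonempty₀ {z ∈ s | z ≤ f z} (fun C hCt hC y hy => by
      refine ⟨sSup C, ⟨hs C (fun z hz => (hCt hz).1) ⟨y, hy⟩ hC, ?_⟩, fun z => le_sSup⟩
      exact sSup_le fun z hz => (hCt hz).2.trans (hf (le_sSup hz))) c ⟨hc, hcf⟩
  exact ⟨m, hms, hcm, (hmax ⟨hfs hms, hf hmf⟩ hmf).antisymm hmf⟩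

theorem exists_fixedPoint_mem_fiber {α β : Type*} [CompleteSemilatticeSup α]
    [CompleteSemilatticeSup β]
    {f : α → α} (hf : Monotone f) {g : β → β} {k : α → β}
    (hk : ∀ C : Set α, C.Nonempty → IsChain (· ≤ ·) C → k (sSup C) = sSup (k '' C))
    (hkfg : ∀ a, k (f a) = g (k a)) {x : β} (hx : g x = x)
    {c : α} (hc : k c = x) (hcf : c ≤ f c) : ∃ z, k z = x ∧ f z = z := by
  have hfiber : MapsTo f (k ⁻¹' {x}) (k ⁻¹' {x}) := fun a (ha : k a = x) => by
    simp [hkfg, ha, hx]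
  have hchain_sSup C (hCx : C ⊆ k ⁻¹' {x}) (hCne : C.Nonempty) (hC : IsChain (· ≤ ·) C) :
      sSup C ∈ k ⁻¹' {x} := by
    rw [mem_preimage, hk C hCne hC, image_congr (fun a ha => hCx ha), hCne.image_const,
      sSup_singleton, mem_singleton_iff]
  obtain ⟨z, hz, -, hfz⟩ := exists_fixedPoint_ge_of_chain_closed hf hfiber hchain_sSup hc hcf
  exact ⟨z, hz, hfz⟩

theorem mimic_least_fixpoint_general {Lt L : Type*} [CompleteLattice Lt] [CompleteLattice L]
    (Ot : Lt → Lt) (O : L → L) (k : Lt → L)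
    (hOt : Monotone Ot)
    (hchain : ∀ C : Set Lt, C.Nonempty → IsChain (· ≤ ·) C →
        k (sInf C) = sInf (k '' C) ∧ k (sSup C) = sSup (k '' C))
    (hcentral : ∀ x : L, (∃ y : Lt, k y = x) →
        ∃ c : Lt, k c = x ∧ ∀ d : Lt, k d = x → c ≤ d ∨ d ≤ c)
    (hcomm : ∀ x : Lt, k (Ot x) = O (k x))
    (himg : ∀ x : L, ∃ y : Lt, k y = O x) :
    ∀ y : Lt, IsLeast {a : Lt | Ot a = a} y → IsLeast {x : L | O x = x} (k y) := by
  intro y ⟨hyfix, hyleast⟩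
  have hkSup C hCne hC : k (sSup C) = sSup (k '' C) := (hchain C hCne hC).2
  have hk : Monotone k := .of_map_sSup_chain hkSup
  refine ⟨(hcomm y).symm.trans (congrArg k hyfix), fun x (hx : O x = x) => ?_⟩
  obtain ⟨z, hz⟩ := himg x
  obtain ⟨c, hc, hcomparable⟩ := hcentral x ⟨z, hz.trans hx⟩
  rcases hcomparable (Ot c) (by rw [hcomm, hc, hx]) with hcOt | hOtc
  · obtain ⟨w, hw, hwfix⟩ := exists_fixedPoint_mem_fiber hOt hkSup hcomm hx hc hcOt
    exact hw ▸ hk (hyleast hwfix)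
  · have hlfp : y ≤ OrderHom.lfp ⟨Ot, hOt⟩ := hyleast (OrderHom.map_lfp ⟨Ot, hOt⟩)
    exact hc ▸ hk (hlfp.trans (OrderHom.lfp_le _ hOtc))

/-- Under k-similarity of the complete lattices L̃ and L and with monotone Õ, O
such that Õ k-mimics O, the image under k of the least fixpoint of Õ is the
least fixpoint of O. -/
theorem mimic_least_fixpoint {Lt L : Type*} [CompleteLattice Lt] [CompleteLattice L]
    (Ot : Lt → Lt) (O : L → L) (k : Lt → L)
    (hOt : Monotone Ot) (hO : Monotone O)
    (hchain : ∀ C : Set Lt, C.Nonempty → IsChain (· ≤ ·) C →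
        k (sInf C) = sInf (k '' C) ∧ k (sSup C) = sSup (k '' C))
    (hcentral : ∀ x : L, (∃ y : Lt, k y = x) →
        ∃ c : Lt, k c = x ∧ ∀ d : Lt, k d = x → c ≤ d ∨ d ≤ c)
    (hcomm : ∀ x : Lt, k (Ot x) = O (k x))
    (himg : ∀ x : L, ∃ y : Lt, k y = O x) :
    ∀ y : Lt, IsLeast {a : Lt | Ot a = a} y → IsLeast {x : L | O x = x} (k y) :=
  mimic_least_fixpoint_general Ot O k hOt hchain hcentral hcomm himg
end

section
/- For a logic program P with a splitting (Σ_i)_{i∈I} of its alphabet, the four-valued immediate consequence operator T_P (the Fitting operator) on the bilattice of the product lattice ⊗_{i∈I} 2^{Σ_i} is stratifiable. -/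
/-- A propositional clause `head ← pos, ¬neg`: the head atom, the atoms occurring
positively in the body, and the atoms occurring negated in the body. -/
structure Clause (S : Type*) where
  head : S
  pos : Set S
  neg : Set S

/-- The one-step provability operator U_P: U_P(X,Y) is the set of atoms p for which
some clause of P with head p has a body that is true in the pair (X,Y) — positive
body literals are true in X, negative body literals are evaluated in Y. -/
def UP {S : Type*} (P : Set (Clause S)) (X Y : Set S) : Set S :=
  {p | ∃ c ∈ P, c.head = p ∧ c.pos ⊆ X ∧ ∀ q ∈ c.neg, q ∉ Y}

lemma UP_aux {S I : Type*} [PartialOrder I]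
    (P : Set (Clause S)) (lvl : S → I)
    (hsplit : ∀ c ∈ P, (∀ p ∈ c.pos, lvl p ≤ lvl c.head) ∧
        (∀ p ∈ c.neg, lvl p ≤ lvl c.head))
    (X Y X' Y' : Set S) (i : I)
    (h : ∀ p : S, lvl p ≤ i → ((p ∈ X ↔ p ∈ X') ∧ (p ∈ Y ↔ p ∈ Y')))
    (p : S) (hp : lvl p ≤ i) (hmem : p ∈ UP P X Y) : p ∈ UP P X' Y' := by
  obtain ⟨c, hc, hh, hpos, hneg⟩ := hmem
  refine ⟨c, hc, hh, ?_, ?_⟩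
  · intro q hq
    exact ((h q (le_trans ((hsplit c hc).1 q hq) (hh ▸ hp))).1).mp (hpos hq)
  · intro q hq hq'
    exact hneg q hq (((h q (le_trans ((hsplit c hc).2 q hq) (hh ▸ hp))).2).mpr hq')

/-- For a logic program P with a splitting (Σ_i)_{i∈I} of its alphabet (given by a
level mapping lvl into a well-founded partial order that respects the dependency
order of P), the four-valued Fitting operator T_P(X,Y) = (U_P(X,Y), U_P(Y,X)) on
the bilattice of the product lattice ⊗_{i∈I} 2^{Σ_i} is stratifiable: its value
on atoms of level ≤ i depends only on the input restricted to atoms of level ≤ i. -/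
theorem fitting_operator_stratifiable {S I : Type*} [PartialOrder I] [WellFoundedLT I]
    (P : Set (Clause S)) (lvl : S → I)
    -- the splitting agrees with the dependency order of P
    (hsplit : ∀ c ∈ P, (∀ p ∈ c.pos, lvl p ≤ lvl c.head) ∧
        (∀ p ∈ c.neg, lvl p ≤ lvl c.head)) :
    ∀ (X Y X' Y' : Set S) (i : I),
      (∀ p : S, lvl p ≤ i → ((p ∈ X ↔ p ∈ X') ∧ (p ∈ Y ↔ p ∈ Y'))) →
      ∀ p : S, lvl p ≤ i →
        ((p ∈ UP P X Y ↔ p ∈ UP P X' Y') ∧ (p ∈ UP P Y X ↔ p ∈ UP P Y' X')) := by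
  intro X Y X' Y' i h p hp
  have h' : ∀ q : S, lvl q ≤ i → ((q ∈ X' ↔ q ∈ X) ∧ (q ∈ Y' ↔ q ∈ Y)) := by
    intro q hq; exact ⟨(h q hq).1.symm, (h q hq).2.symm⟩
  have hswap : ∀ q : S, lvl q ≤ i → ((q ∈ Y ↔ q ∈ Y') ∧ (q ∈ X ↔ q ∈ X')) := by
    intro q hq; exact ⟨(h q hq).2, (h q hq).1⟩
  have hswap' : ∀ q : S, lvl q ≤ i → ((q ∈ Y' ↔ q ∈ Y) ∧ (q ∈ X' ↔ q ∈ X)) := by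
    intro q hq; exact ⟨(h q hq).2.symm, (h q hq).1.symm⟩
  exact ⟨⟨UP_aux P lvl hsplit X Y X' Y' i h p hp,
          UP_aux P lvl hsplit X' Y' X Y i h' p hp⟩,
         ⟨UP_aux P lvl hsplit Y X Y' X' i hswap p hp,
          UP_aux P lvl hsplit Y' X' Y X i hswap' p hp⟩⟩
end
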